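/- Every n-qubit stabiliser state that is not a computational basis state participates in a linearly dependent triple: there exist stabiliser states |t1⟩, |t2⟩, each with support size strictly smaller than that of |s⟩, and nonzero complex scalars x1, x2 with |s⟩ = x1|t1⟩ + x2|t2⟩. -/

import Mathlib

open scoped Matrix ComplexConjugate

/-- Bit vectors of length `n` over `ℤ/2`. -/
abbrev V2 (n : ℕ) := Fin n → ZMod 2

/-- Dot product over `ℤ/2`. -/
def dotZ2 {n : ℕ} (a b : V2 n) : ZMod 2 := ∑ i, a i * b i

/-- The symplectic product on `(ℤ/2)^{2n}`: `[(p₁,q₁),(p₂,q₂)] = p₁·q₂ - p₂·q₁`. -/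
def symp {n : ℕ} (x y : V2 n × V2 n) : ZMod 2 := dotZ2 x.1 y.2 - dotZ2 y.1 x.2

/-- The computational basis vector `|z⟩` in `ℂ^{2^n}`. -/
noncomputable def basisVec {n : ℕ} (z : V2 n) : V2 n → ℂ := fun y => if y = z then 1 else 0

/-- The Pauli operator `W(p,q) = (-i)^{p·q mod 4} Z^p X^q`, where
`Z^p X^q |z⟩ = (-1)^{(z+q)·p} |z+q⟩` (bits of `p·q` lifted to integers). -/
noncomputable def W {n : ℕ} (p q : V2 n) : Matrix (V2 n) (V2 n) ℂ :=
  Matrix.of fun y z =>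
    if y = z + q then
      (-Complex.I) ^ ((∑ i, (p i).val * (q i).val) % 4) * (-1 : ℂ) ^ (dotZ2 (z + q) p).val
    else 0
/-- A subspace of `(ℤ/2)^{2n}` is isotropic if the symplectic form vanishes on it. -/
def IsIsotropic {n : ℕ} (L : Submodule (ZMod 2) (V2 n × V2 n)) : Prop :=
  ∀ x ∈ L, ∀ y ∈ L, symp x y = 0

/-- A Lagrangian subspace: a maximal isotropic subspace of `(ℤ/2)^{2n}`. -/
def IsLagrangian {n : ℕ} (L : Submodule (ZMod 2) (V2 n × V2 n)) : Prop :=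
  IsIsotropic L ∧ ∀ L', IsIsotropic L' → L ≤ L' → L' = L
/-- A stabiliser state: a unit-norm simultaneous eigenvector of `n` commuting Pauli
operators whose exponent vectors span a Lagrangian subspace of `(ℤ/2)^{2n}`. -/
noncomputable def IsStabiliserState {n : ℕ} (ψ : V2 n → ℂ) : Prop :=
  (∑ z, ‖ψ z‖ ^ 2) = 1 ∧
  ∃ (p q : Fin n → V2 n) (lam : Fin n → ZMod 2),
    IsLagrangian (Submodule.span (ZMod 2) (Set.range fun j => (p j, q j))) ∧
    ∀ j, (W (p j) (q j)).mulVec ψ = ((-1 : ℂ) ^ (lam j).val) • ψ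

-- basics
lemma z2_cases (a : ZMod 2) : a = 0 ∨ a = 1 := by revert a; decide
lemma z2_add_self (a : ZMod 2) : a + a = 0 := by revert a; decide
lemma v2_add_self {n : ℕ} (a : V2 n) : a + a = 0 := funext fun i => z2_add_self (a i)
lemma v2_add_add_cancel {n : ℕ} (a b : V2 n) : a + b + b = a := by
  rw [add_assoc, v2_add_self, add_zero]

noncomputable def sgn (x : ZMod 2) : ℂ := (-1) ^ x.val
noncomputable def ph {n : ℕ} (p q : V2 n) : ℂ :=
  (-Complex.I) ^ ((∑ i, (p i).val * (q i).val) % 4)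

lemma sgn_zero : sgn 0 = 1 := rfl
lemma sgn_one : sgn 1 = -1 := by norm_num [sgn, ZMod.val_one]
lemma sgn_mul_self (x : ZMod 2) : sgn x * sgn x = 1 := by
  rcases z2_cases x with h | h <;> simp [h, sgn_zero, sgn_one]
lemma sgn_add (x y : ZMod 2) : sgn (x + y) = sgn x * sgn y := by
  rcases z2_cases x with h | h <;> rcases z2_cases y with h' | h' <;>
    simp [h, h', sgn, sgn_zero, sgn_one, show ((1:ZMod 2)+1) = 0 from rfl, ZMod.val_one]
lemma sgn_ne_zero (x : ZMod 2) : sgn x ≠ 0 := by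
  rcases z2_cases x with h | h <;> simp [h, sgn_zero, sgn_one]
lemma sgn_abs (x : ZMod 2) : ‖sgn x‖ = 1 := by
  rcases z2_cases x with h | h <;> simp [h, sgn_zero, sgn_one]
lemma sgn_inj {x y : ZMod 2} (h : sgn x = sgn y) : x = y := by
  rcases z2_cases x with hx | hx <;> rcases z2_cases y with hy | hy <;>
    simp_all [sgn_zero, sgn_one] <;> norm_num at h
lemma ph_ne_zero {n : ℕ} (p q : V2 n) : ph p q ≠ 0 :=
  pow_ne_zero _ (by simp [Complex.I_ne_zero])
lemma ph_abs {n : ℕ} (p q : V2 n) : ‖ph p q‖ = 1 := by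
  rw [ph, norm_pow]; simp

lemma neg_one_pow_natCast_val (N : ℕ) : sgn ((N : ZMod 2)) = (-1 : ℂ) ^ N := by
  rw [sgn, ZMod.val_natCast, ← neg_one_pow_eq_pow_mod_two]

lemma dotZ2_natCast {n : ℕ} (a b : V2 n) :
    dotZ2 a b = ((∑ i, (a i).val * (b i).val : ℕ) : ZMod 2) := by
  rw [dotZ2]
  push_cast
  simp [ZMod.natCast_val, ZMod.cast_id]

lemma key_parity {n : ℕ} (p q : V2 n) : ph p q * ph p q * sgn (dotZ2 q p) = 1 := by
  have h1 : dotZ2 q p = ((∑ i, (p i).val * (q i).val : ℕ) : ZMod 2) := by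
    rw [dotZ2_natCast]; congr 1; exact Finset.sum_congr rfl fun i _ => Nat.mul_comm _ _
  set S := ∑ i, (p i).val * (q i).val with hS
  rw [h1, neg_one_pow_natCast_val, ph, ← pow_add]
  have : (-Complex.I) ^ (S % 4 + S % 4) = (-1 : ℂ) ^ S := by
    rw [← two_mul, pow_mul]
    have : (-Complex.I) ^ 2 = -1 := by
      simp [pow_two]
    rw [this, neg_one_pow_eq_pow_mod_two, Nat.mod_mod_of_dvd _ (by norm_num),
      ← neg_one_pow_eq_pow_mod_two]
  rw [this, ← pow_add, ← two_mul, pow_mul]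
  norm_num

lemma dotZ2_add_left {n : ℕ} (a b c : V2 n) : dotZ2 (a + b) c = dotZ2 a c + dotZ2 b c := by
  simp [dotZ2, add_mul, Finset.sum_add_distrib]
lemma dotZ2_add_right {n : ℕ} (a b c : V2 n) : dotZ2 a (b + c) = dotZ2 a b + dotZ2 a c := by
  simp [dotZ2, mul_add, Finset.sum_add_distrib]
lemma dotZ2_comm {n : ℕ} (a b : V2 n) : dotZ2 a b = dotZ2 b a := by
  simp [dotZ2, mul_comm]

lemma W_mulVec {n : ℕ} (p q : V2 n) (φ : V2 n → ℂ) (y : V2 n) :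
    (W p q).mulVec φ y = ph p q * sgn (dotZ2 y p) * φ (y + q) := by
  rw [Matrix.mulVec, dotProduct]
  rw [Finset.sum_eq_single (y + q)]
  · rw [W]
    simp only [Matrix.of_apply, v2_add_add_cancel, if_pos rfl]
    rfl
  · intro z _ hz
    rw [W]
    simp only [Matrix.of_apply]
    rw [if_neg, zero_mul]
    intro h
    exact hz (by rw [h, v2_add_add_cancel])
  · intro h
    exact absurd (Finset.mem_univ _) h

def Eig {n : ℕ} (p q : V2 n) (μ : ℂ) (φ : V2 n → ℂ) : Prop :=
  ∀ y, ph p q * sgn (dotZ2 y p) * φ (y + q) = μ * φ y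

lemma eig_of_mulVec {n : ℕ} {p q : V2 n} {μ : ℂ} {φ : V2 n → ℂ}
    (h : (W p q).mulVec φ = μ • φ) : Eig p q μ φ := fun y => by
  have := congrFun h y
  rw [W_mulVec] at this
  simpa using this

lemma mulVec_of_eig {n : ℕ} {p q : V2 n} {μ : ℂ} {φ : V2 n → ℂ}
    (h : Eig p q μ φ) : (W p q).mulVec φ = μ • φ := funext fun y => by
  rw [W_mulVec]; simpa using h y

lemma eig_compose {n : ℕ} {p₁ q₁ p₂ q₂ : V2 n} {μ₁ μ₂ : ℂ} {φ : V2 n → ℂ}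
    (h₁ : Eig p₁ q₁ μ₁ φ) (h₂ : Eig p₂ q₂ μ₂ φ) :
    ∃ μ : ℂ, Eig (p₁ + p₂) (q₁ + q₂) μ φ := by
  set a := ph p₁ q₁ with ha
  set b := ph p₂ q₂ with hb
  set c := ph (p₁ + p₂) (q₁ + q₂) with hc
  have hne1 : a ≠ 0 := ph_ne_zero _ _
  have hne2 : b ≠ 0 := ph_ne_zero _ _
  refine ⟨(a * b)⁻¹ * (c * sgn (dotZ2 q₂ p₁) * μ₁ * μ₂), fun y => ?_⟩
  set μ := (a * b)⁻¹ * (c * sgn (dotZ2 q₂ p₁) * μ₁ * μ₂) with hμ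
  have hμab : a * b * μ = c * sgn (dotZ2 q₂ p₁) * μ₁ * μ₂ := by
    rw [hμ]; field_simp
  have e2 := h₂ y
  have e1 := h₁ (y + q₂)
  have hy : y + (q₁ + q₂) = y + q₂ + q₁ := by
    rw [add_assoc, add_comm q₁ q₂, ← add_assoc]
  rw [dotZ2_add_left, sgn_add] at e1
  rw [dotZ2_add_right, sgn_add]
  rw [hy]
  set u := sgn (dotZ2 y p₁)
  set w := sgn (dotZ2 y p₂)
  set t := sgn (dotZ2 q₂ p₁)
  set X := φ y
  set Y := φ (y + q₂)
  set Z := φ (y + q₂ + q₁)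
  have st : t * t = 1 := sgn_mul_self _
  apply mul_left_cancel₀ (mul_ne_zero hne1 hne2)
  linear_combination (c*t*b*w) * e1 + (c*t*μ₁) * e2 - (a*b*c*u*w*Z) * st - X * hμab

lemma eig_sq {n : ℕ} {p q : V2 n} {μ : ℂ} {φ : V2 n → ℂ}
    (h : Eig p q μ φ) (hφ : ∃ y, φ y ≠ 0) : μ = 1 ∨ μ = -1 := by
  obtain ⟨y, hy⟩ := hφ
  have e1 := h y
  have e2 := h (y + q)
  rw [v2_add_add_cancel, dotZ2_add_left, sgn_add] at e2
  set a := ph p q with ha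
  have hane : a ≠ 0 := ph_ne_zero _ _
  set u := sgn (dotZ2 y p) with hu
  set t := sgn (dotZ2 q p) with ht
  have su : u * u = 1 := sgn_mul_self _
  have kp : a * a * t = 1 := key_parity p q
  have hY : φ (y + q) ≠ 0 := by
    intro h0
    rw [h0, mul_zero] at e1
    have hμ : μ = 0 := by
      rcases mul_eq_zero.mp e1.symm with h' | h'
      · exact h'
      · exact absurd h' hy
    rw [h0, hμ, zero_mul] at e2
    have hne : a * (u * t) ≠ 0 :=
      mul_ne_zero hane (mul_ne_zero (sgn_ne_zero _) (sgn_ne_zero _))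
    rcases mul_eq_zero.mp e2 with h' | h'
    · exact hne h'
    · exact hy h'
  have key : μ * μ = 1 := by
    apply mul_left_cancel₀ (mul_ne_zero hy hY)
    set X := φ y
    set Y := φ (y + q)
    linear_combination (-(μ*Y))*e1 + (-(a*u*Y))*e2 + (X*Y*a*a*t)*su + (X*Y)*kp
  exact mul_self_eq_one_iff.mp key

/-- restriction of a vector to the slc where coordinate `i` equals `b` -/
noncomputable def slc {n : ℕ} (i : Fin n) (b : ZMod 2) (φ : V2 n → ℂ) : V2 n → ℂ :=
  fun z => if z i = b then φ z else 0

lemma eig_slc {n : ℕ} {p q : V2 n} {μ : ℂ} {φ : V2 n → ℂ} (i : Fin n) (b : ZMod 2)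
    (hq : q i = 0) (h : Eig p q μ φ) : Eig p q μ (slc i b φ) := by
  intro y
  have hyq : (y + q) i = y i := by
    show y i + q i = y i
    rw [hq, add_zero]
  by_cases hb : y i = b
  · have h1 : slc i b φ (y + q) = φ (y + q) := by
      rw [slc, if_pos (by rw [hyq, hb])]
    have h2 : slc i b φ y = φ y := by rw [slc, if_pos hb]
    rw [h1, h2]; exact h y
  · have h1 : slc i b φ (y + q) = 0 := by
      rw [slc, if_neg (by rw [hyq]; exact hb)]
    have h2 : slc i b φ y = 0 := by rw [slc, if_neg hb]
    rw [h1, h2, mul_zero, mul_zero]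

lemma dotZ2_single {n : ℕ} (y : V2 n) (i : Fin n) : dotZ2 y (Pi.single i 1) = y i := by
  rw [dotZ2, Finset.sum_eq_single i]
  · simp
  · intro k _ hk; simp [Pi.single_apply, hk]
  · intro h; exact absurd (Finset.mem_univ _) h

lemma ph_q_zero {n : ℕ} (p : V2 n) : ph p 0 = 1 := by
  rw [ph]
  simp

lemma eig_Zi {n : ℕ} (i : Fin n) (b : ZMod 2) (φ : V2 n → ℂ) :
    Eig (Pi.single i 1) 0 (sgn b) (slc i b φ) := by
  intro y
  rw [add_zero, ph_q_zero, one_mul, dotZ2_single]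
  by_cases hb : y i = b
  · rw [hb]
  · rw [slc, if_neg hb, mul_zero, mul_zero]

lemma eig_smul {n : ℕ} {p q : V2 n} {μ c : ℂ} {φ : V2 n → ℂ}
    (h : Eig p q μ φ) : Eig p q μ (c • φ) := by
  intro y
  have := h y
  simp only [Pi.smul_apply, smul_eq_mul]
  linear_combination c * this

lemma symp_self {n : ℕ} (x : V2 n × V2 n) : symp x x = 0 := by
  rw [symp, dotZ2_comm, sub_self]

lemma symp_comm {n : ℕ} (x y : V2 n × V2 n) : symp x y = symp y x := by
  rw [symp, symp]
  have : ∀ a b : ZMod 2, a - b = b - a := by decide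
  rw [this, dotZ2_comm x.1 y.2, dotZ2_comm y.1 x.2]

/-- `symp v ·` as a linear map. -/
def sympR {n : ℕ} (v : V2 n × V2 n) : (V2 n × V2 n) →ₗ[ZMod 2] ZMod 2 where
  toFun x := symp v x
  map_add' x y := by
    simp only [symp, Prod.fst_add, Prod.snd_add, dotZ2_add_right, dotZ2_add_left]
    ring
  map_smul' c x := by
    rcases z2_cases c with h | h <;>
      simp [h, symp, Prod.smul_fst, Prod.smul_snd, dotZ2]

lemma symp_add_right {n : ℕ} (v x y : V2 n × V2 n) :
    symp v (x + y) = symp v x + symp v y := (sympR v).map_add x y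

lemma symp_smul_right {n : ℕ} (v x : V2 n × V2 n) (c : ZMod 2) :
    symp v (c • x) = c * symp v x := (sympR v).map_smul c x

lemma symp_span_zero {n : ℕ} {s : Set (V2 n × V2 n)} {v : V2 n × V2 n}
    (h : ∀ x ∈ s, symp v x = 0) {y : V2 n × V2 n}
    (hy : y ∈ Submodule.span (ZMod 2) s) : symp v y = 0 := by
  have hle : Submodule.span (ZMod 2) s ≤ LinearMap.ker (sympR v) :=
    Submodule.span_le.mpr fun x hx => LinearMap.mem_ker.mpr (h x hx)
  exact hle hy

lemma span_isotropic {n : ℕ} {s : Set (V2 n × V2 n)}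
    (h : ∀ x ∈ s, ∀ y ∈ s, symp x y = 0) :
    IsIsotropic (Submodule.span (ZMod 2) s) := by
  intro x hx y hy
  have key : ∀ z ∈ s, symp z y = 0 := fun z hz =>
    symp_span_zero (fun w hw => h z hz w hw) hy
  rw [symp_comm]
  exact symp_span_zero (fun z hz => by rw [symp_comm]; exact key z hz) hx

lemma symp_add_left {n : ℕ} (x y v : V2 n × V2 n) :
    symp (x + y) v = symp x v + symp y v := by
  rw [symp_comm, symp_add_right, symp_comm v x, symp_comm v y]

lemma symp_smul_left {n : ℕ} (x v : V2 n × V2 n) (c : ZMod 2) :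
    symp (c • x) v = c * symp x v := by
  rw [symp_comm, symp_smul_right, symp_comm]

lemma pair_add_add_cancel {n : ℕ} (a b : V2 n × V2 n) : a + b + b = a := by
  ext <;> simp [v2_add_add_cancel]
  · exact congrFun (v2_add_add_cancel a.1 b.1) _
  · exact congrFun (v2_add_add_cancel a.2 b.2) _

lemma lagrangian_new {n : ℕ} (g : Fin n → V2 n × V2 n)
    (hL : IsLagrangian (Submodule.span (ZMod 2) (Set.range g)))
    (v : V2 n × V2 n) (j0 : Fin n) (hv1 : symp v (g j0) = 1)
    (h : Fin n → V2 n × V2 n)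
    (hdef : ∀ j, h j = if j = j0 then v else if symp v (g j) = 1 then g j + g j0 else g j) :
    IsLagrangian (Submodule.span (ZMod 2) (Set.range h)) := by
  set L := Submodule.span (ZMod 2) (Set.range g) with hLdef
  set S := Submodule.span (ZMod 2) (Set.range h) with hSdef
  have hgL : ∀ j, g j ∈ L := fun j => Submodule.subset_span (Set.mem_range_self j)
  have hhS : ∀ j, h j ∈ S := fun j => Submodule.subset_span (Set.mem_range_self j)
  have hvh : h j0 = v := by rw [hdef j0, if_pos rfl]
  have hvS : v ∈ S := hvh ▸ hhS j0
  have hjL : ∀ j, j ≠ j0 → h j ∈ L := by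
    intro j hj
    rw [hdef j, if_neg hj]
    by_cases hc : symp v (g j) = 1
    · rw [if_pos hc]; exact Submodule.add_mem _ (hgL j) (hgL j0)
    · rw [if_neg hc]; exact hgL j
  have hSv : ∀ j, symp v (h j) = 0 := by
    intro j
    rw [hdef j]
    by_cases hj : j = j0
    · rw [if_pos hj]; exact symp_self v
    · rw [if_neg hj]
      by_cases hc : symp v (g j) = 1
      · rw [if_pos hc, symp_add_right, hc, hv1]; decide
      · rw [if_neg hc]
        rcases z2_cases (symp v (g j)) with h0 | h0
        · exact h0
        · exact absurd h0 hc
  have hsympvS : ∀ x ∈ S, symp v x = 0 := fun x hx =>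
    symp_span_zero (fun w hw => by obtain ⟨j, rfl⟩ := hw; exact hSv j) hx
  have hpair : ∀ j k, symp (h j) (h k) = 0 := by
    intro j k
    by_cases hj : j = j0
    · rw [hj, hvh]; exact hSv k
    · by_cases hk : k = j0
      · rw [hk, hvh, symp_comm]; exact hSv j
      · exact hL.1 _ (hjL j hj) _ (hjL k hk)
  have hIsoS : IsIsotropic S :=
    span_isotropic (by
      rintro x ⟨j, rfl⟩ y ⟨k, rfl⟩
      exact hpair j k)
  refine ⟨hIsoS, ?_⟩
  intro M hM hSM
  refine le_antisymm ?_ hSM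
  intro x hx
  set β := symp x (g j0) with hβ
  set y := x + β • v with hy
  have hz2 : ∀ a : ZMod 2, a + a = 0 := z2_add_self
  have hyj0 : symp y (g j0) = 0 := by
    rw [hy, symp_add_left, symp_smul_left, hv1, mul_one, ← hβ, hz2]
  have hyh : ∀ j, symp y (h j) = 0 := by
    intro j
    rw [hy, symp_add_left, symp_smul_left, hSv j, mul_zero, add_zero]
    exact hM x hx (h j) (hSM (hhS j))
  have hyg : ∀ j, symp y (g j) = 0 := by
    intro j
    by_cases hj : j = j0
    · rw [hj]; exact hyj0
    · by_cases hc : symp v (g j) = 1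
      · have hgj : g j = h j + g j0 := by
          rw [hdef j, if_neg hj, if_pos hc, pair_add_add_cancel]
        rw [hgj, symp_add_right, hyh j, hyj0, add_zero]
      · have hgj : g j = h j := by rw [hdef j, if_neg hj, if_neg hc]
        rw [hgj]; exact hyh j
  -- y ∈ L by maximality of L
  have hyL : y ∈ L := by
    set L2 := Submodule.span (ZMod 2) (Set.range g ∪ {y}) with hL2
    have hIso2 : IsIsotropic L2 := by
      apply span_isotropic
      rintro a (⟨j, rfl⟩ | ha) b (⟨k, rfl⟩ | hb)
      · exact hL.1 _ (hgL j) _ (hgL k)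
      · rw [Set.mem_singleton_iff] at hb; subst hb
        rw [symp_comm]; exact hyg j
      · rw [Set.mem_singleton_iff] at ha; subst ha
        exact hyg _
      · rw [Set.mem_singleton_iff] at ha hb; subst ha; subst hb
        exact symp_self y
    have hle2 : L ≤ L2 := Submodule.span_mono Set.subset_union_left
    have := hL.2 L2 hIso2 hle2
    rw [← this]
    exact Submodule.subset_span (Set.mem_union_right _ rfl)
  -- L ≤ S ⊔ span {g j0}
  have hLsub : L ≤ S ⊔ Submodule.span (ZMod 2) {g j0} := by
    rw [hLdef, Submodule.span_le]
    rintro a ⟨j, rfl⟩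
    by_cases hj : j = j0
    · rw [hj]
      exact Submodule.mem_sup_right (Submodule.mem_span_singleton_self _)
    · by_cases hc : symp v (g j) = 1
      · have hgj : g j = h j + g j0 := by
          rw [hdef j, if_neg hj, if_pos hc, pair_add_add_cancel]
        rw [hgj]
        exact Submodule.add_mem _ (Submodule.mem_sup_left (hhS j))
          (Submodule.mem_sup_right (Submodule.mem_span_singleton_self _))
      · have hgj : g j = h j := by rw [hdef j, if_neg hj, if_neg hc]
        rw [hgj]
        exact Submodule.mem_sup_left (hhS j)
  obtain ⟨s, hs, t, ht, hst⟩ := Submodule.mem_sup.mp (hLsub hyL)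
  obtain ⟨d, rfl⟩ := Submodule.mem_span_singleton.mp ht
  have hvy : symp v y = 0 := by
    rw [hy, symp_add_right, symp_smul_right, symp_self, mul_zero, add_zero]
    exact hM v (hSM hvS) x hx
  have hd : d = 0 := by
    have : symp v y = d := by
      rw [← hst, symp_add_right, hsympvS s hs, symp_smul_right, hv1, mul_one, zero_add]
    rw [hvy] at this
    exact this.symm
  have hyS : y ∈ S := by
    rw [← hst, hd, zero_smul, add_zero]; exact hs
  have : x = y + β • v := by
    rw [hy, add_assoc, ← add_smul,
      show β + β = 0 from z2_add_self β, zero_smul, add_zero]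
  rw [this]
  exact Submodule.add_mem _ hyS (Submodule.smul_mem _ _ hvS)


lemma dotZ2_zero_right {n : ℕ} (a : V2 n) : dotZ2 a 0 = 0 := by simp [dotZ2]

/-- Every stabiliser state that is not a computational basis state participates in a
linearly dependent triple with two stabiliser states of strictly smaller support. -/
theorem stab_in_dependent_triple {n : ℕ} (ψ : V2 n → ℂ) (hψ : IsStabiliserState ψ)
    (hnc : ∀ (z : V2 n) (c : ℂ), ψ ≠ c • basisVec z) :
    ∃ (t₁ t₂ : V2 n → ℂ) (x₁ x₂ : ℂ),
      IsStabiliserState t₁ ∧ IsStabiliserState t₂ ∧ x₁ ≠ 0 ∧ x₂ ≠ 0 ∧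
      Nat.card {z : V2 n // t₁ z ≠ 0} < Nat.card {z : V2 n // ψ z ≠ 0} ∧
      Nat.card {z : V2 n // t₂ z ≠ 0} < Nat.card {z : V2 n // ψ z ≠ 0} ∧
      ψ = x₁ • t₁ + x₂ • t₂ := by
  obtain ⟨hnorm, p, q, lam, hLag, heigW⟩ := hψ
  have heig : ∀ j, Eig (p j) (q j) (sgn (lam j)) ψ := fun j => eig_of_mulVec (heigW j)
  have hψex : ∃ y, ψ y ≠ 0 := by
    by_contra hc
    push_neg at hc
    simp [hc] at hnorm
  -- some generator must move the basis
  have hqex : ∃ j i, q j i = 1 := by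
    by_contra hq
    push_neg at hq
    have hq0 : ∀ j, q j = 0 := by
      intro j; funext i
      rcases z2_cases (q j i) with h0 | h1
      · exact h0
      · exact absurd h1 (hq j i)
    obtain ⟨y₀, hy₀⟩ := hψex
    have hdot : ∀ z, ψ z ≠ 0 → ∀ j, dotZ2 z (p j) = lam j := by
      intro z hz j
      have e := heig j z
      rw [hq0 j, add_zero, ph_q_zero, one_mul] at e
      exact sgn_inj (mul_right_cancel₀ hz e)
    have hzeq : ∀ z, ψ z ≠ 0 → z = y₀ := by
      intro z hz
      set u : V2 n × V2 n := (0, z + y₀) with hu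
      have husymp : ∀ j, symp u (p j, q j) = 0 := by
        intro j
        rw [symp]
        show dotZ2 0 (q j) - dotZ2 (p j) (z + y₀) = 0
        rw [dotZ2_add_right, dotZ2_comm (p j) z, dotZ2_comm (p j) y₀,
          hdot z hz j, hdot y₀ hy₀ j, z2_add_self]
        simp [dotZ2]
      have huL : u ∈ Submodule.span (ZMod 2) (Set.range fun j => (p j, q j)) := by
        set L2 := Submodule.span (ZMod 2) (Set.range (fun j => (p j, q j)) ∪ {u}) with hL2
        have hIso2 : IsIsotropic L2 := by
          apply span_isotropic
          rintro a (⟨j, rfl⟩ | ha) b (⟨k, rfl⟩ | hb)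
          · exact hLag.1 _ (Submodule.subset_span (Set.mem_range_self j)) _
              (Submodule.subset_span (Set.mem_range_self k))
          · rw [Set.mem_singleton_iff] at hb; subst hb
            rw [symp_comm]; exact husymp j
          · rw [Set.mem_singleton_iff] at ha; subst ha
            exact husymp _
          · rw [Set.mem_singleton_iff] at ha hb; subst ha; subst hb
            exact symp_self u
        have := hLag.2 L2 hIso2 (Submodule.span_mono Set.subset_union_left)
        rw [← this]
        exact Submodule.subset_span (Set.mem_union_right _ rfl)
      have hsnd : u.2 = 0 := by
        have hle : Submodule.span (ZMod 2) (Set.range fun j => (p j, q j)) ≤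
            LinearMap.ker (LinearMap.snd (ZMod 2) (V2 n) (V2 n)) := by
          rw [Submodule.span_le]
          rintro a ⟨j, rfl⟩
          exact LinearMap.mem_ker.mpr (hq0 j)
        exact LinearMap.mem_ker.mp (hle huL)
      have : z + y₀ = 0 := hsnd
      have := congrArg (· + y₀) this
      simpa [v2_add_add_cancel] using this
    exact hnc y₀ (ψ y₀) (by
      funext z
      by_cases hz : z = y₀
      · subst hz; simp [basisVec]
      · have : ψ z = 0 := by
          by_contra hne
          exact hz (hzeq z hne)
        simp [basisVec, this, hz])
  obtain ⟨j0, i, hqi⟩ := hqex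
  set gfun : Fin n → V2 n × V2 n := fun j => (p j, q j) with hgfun
  set v : V2 n × V2 n := (Pi.single i 1, (0 : V2 n)) with hv
  have hsympv : ∀ j, symp v (gfun j) = q j i := by
    intro j
    rw [symp]
    show dotZ2 (Pi.single i 1) (q j) - dotZ2 (p j) 0 = q j i
    rw [dotZ2_zero_right, dotZ2_comm, dotZ2_single, sub_zero]
  have hv1 : symp v (gfun j0) = 1 := by rw [hsympv, hqi]
  set h : Fin n → V2 n × V2 n :=
    fun j => if j = j0 then v else if q j i = 1 then gfun j + gfun j0 else gfun j with hh
  have hdef : ∀ j, h j = if j = j0 then v else if symp v (gfun j) = 1 then gfun j + gfun j0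
      else gfun j := by
    intro j
    rw [hh]
    simp only [hsympv j]
  have hLagS : IsLagrangian (Submodule.span (ZMod 2) (Set.range h)) :=
    lagrangian_new gfun hLag v j0 hv1 h hdef
  -- eigenvalue data for the new generators
  have key : ∀ j, ∃ s : ZMod 2, j ≠ j0 →
      (Eig (h j).1 (h j).2 (sgn s) ψ ∧ (h j).2 i = 0) := by
    intro j
    by_cases hj : j = j0
    · exact ⟨0, fun hcon => absurd hj hcon⟩
    · by_cases hc : q j i = 1
      · have hcomp : ∃ μ, Eig (p j + p j0) (q j + q j0) μ ψ := eig_compose (heig j) (heig j0)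
        obtain ⟨μ, hμ⟩ := hcomp
        have hpm := eig_sq hμ hψex
        have hjval : h j = (p j + p j0, q j + q j0) := by
          rw [hh]; simp only [if_neg hj, if_pos hc]; rfl
        have hq0 : (h j).2 i = 0 := by
          rw [hjval]
          show q j i + q j0 i = 0
          rw [hc, hqi, z2_add_self]
        rcases hpm with h1 | h1
        · exact ⟨0, fun _ => ⟨by rw [hjval, sgn_zero, ← h1] at *; exact hμ, hq0⟩⟩
        · exact ⟨1, fun _ => ⟨by rw [hjval, sgn_one, ← h1] at *; exact hμ, hq0⟩⟩
      · have hjval : h j = gfun j := by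
          rw [hh]; simp only [if_neg hj, if_neg hc]
        refine ⟨lam j, fun _ => ⟨by rw [hjval]; exact heig j, ?_⟩⟩
        rw [hjval]
        show q j i = 0
        rcases z2_cases (q j i) with h0 | h1
        · exact h0
        · exact absurd h1 hc
  choose sfun hs using key
  -- norms of the two slices
  have habs : ∀ y, ‖ψ (y + q j0)‖ = ‖ψ y‖ := by
    intro y
    have e := heig j0 y
    have := congrArg (‖·‖) e
    rw [norm_mul, norm_mul, norm_mul, ph_abs, sgn_abs, sgn_abs, one_mul, one_mul, one_mul] at this
    exact this
  have hAB : (∑ z, ‖slc i 0 ψ z‖ ^ 2) + (∑ z, ‖slc i 1 ψ z‖ ^ 2)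
      = 1 := by
    rw [← Finset.sum_add_distrib]
    rw [← hnorm]
    apply Finset.sum_congr rfl
    intro z _
    rcases z2_cases (z i) with h0 | h1
    · rw [slc, slc, if_pos h0, if_neg (by rw [h0]; decide)]
      simp
    · rw [slc, slc, if_neg (by rw [h1]; decide), if_pos h1]
      simp
  have hA : (∑ z, ‖slc i 0 ψ z‖ ^ 2) = ∑ z, ‖slc i 1 ψ z‖ ^ 2 := by
    have hbij : Function.Bijective (fun z : V2 n => z + q j0) :=
      Function.Involutive.bijective (fun z => v2_add_add_cancel z (q j0))
    have := Fintype.sum_bijective _ hbij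
      (fun z => ‖slc i 0 ψ (z + q j0)‖ ^ 2)
      (fun z => ‖slc i 0 ψ z‖ ^ 2) (fun z => rfl)
    rw [← this]
    apply Finset.sum_congr rfl
    intro z _
    have hzq : (z + q j0) i = z i + 1 := by
      show z i + q j0 i = z i + 1
      rw [hqi]
    rcases z2_cases (z i) with h0 | h1
    · simp only [slc]
      rw [if_neg (by rw [hzq, h0]; decide), if_neg (by rw [h0]; decide)]
    · simp only [slc]
      rw [if_pos (by rw [hzq, h1]; decide), if_pos h1, habs]
  have hhalf : ∀ b : ZMod 2, (∑ z, ‖slc i b ψ z‖ ^ 2) = 1 / 2 := by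
    intro b
    have h0 : (∑ z, ‖slc i 0 ψ z‖ ^ 2) = 1 / 2 := by
      rw [hA] at hAB
      linarith [hAB]
    rcases z2_cases b with hb | hb
    · rw [hb]; exact h0
    · rw [hb, ← hA]; exact h0
  have hslcne : ∀ b : ZMod 2, ∃ z, slc i b ψ z ≠ 0 := by
    intro b
    by_contra hc
    push_neg at hc
    have := hhalf b
    simp [hc] at this
  -- the two new stabiliser states
  set c2 : ℂ := (Real.sqrt 2 : ℂ) with hc2
  have hc2ne : c2 ≠ 0 := by
    rw [hc2]
    simp only [ne_eq, Complex.ofReal_eq_zero]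
    positivity
  have hstab : ∀ b : ZMod 2, IsStabiliserState (c2 • slc i b ψ) := by
    intro b
    constructor
    · have : ∀ z, ‖(c2 • slc i b ψ) z‖ ^ 2
          = 2 * ‖slc i b ψ z‖ ^ 2 := by
        intro z
        simp only [Pi.smul_apply, smul_eq_mul, norm_mul, hc2]
        rw [Complex.norm_real, Real.norm_eq_abs, abs_of_nonneg (Real.sqrt_nonneg 2), mul_pow,
          Real.sq_sqrt (by norm_num : (2:ℝ) ≥ 0)]
      rw [Finset.sum_congr rfl (fun z _ => this z), ← Finset.mul_sum, hhalf b]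
      norm_num
    · refine ⟨fun j => (h j).1, fun j => (h j).2, fun j => if j = j0 then b else sfun j, ?_, ?_⟩
      · have : (fun j => ((h j).1, (h j).2)) = h := by
          funext j; exact Prod.mk.eta
        rw [this]
        exact hLagS
      · intro j
        have hEig : Eig (h j).1 (h j).2 (sgn (if j = j0 then b else sfun j)) (c2 • slc i b ψ) := by
          apply eig_smul
          by_cases hj : j = j0
          · have hjv : h j = v := by rw [hh]; simp only [if_pos hj]
            rw [if_pos hj, hjv]
            exact eig_Zi i b ψ
          · rw [if_neg hj]
            exact eig_slc i b (hs j hj).2 ((hs j hj).1)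
        exact mulVec_of_eig hEig
  -- support comparison
  have hcard : ∀ b : ZMod 2,
      Nat.card {z : V2 n // (c2 • slc i b ψ) z ≠ 0} < Nat.card {z : V2 n // ψ z ≠ 0} := by
    intro b
    have hset : {z : V2 n | (c2 • slc i b ψ) z ≠ 0} = {z : V2 n | slc i b ψ z ≠ 0} := by
      ext z
      simp [smul_eq_mul, hc2ne]
    have hss : {z : V2 n | slc i b ψ z ≠ 0} ⊂ {z : V2 n | ψ z ≠ 0} := by
      constructor
      · intro z hz
        simp only [Set.mem_setOf_eq, slc] at hz ⊢
        by_cases hb : z i = b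
        · rw [if_pos hb] at hz; exact hz
        · rw [if_neg hb] at hz; exact absurd rfl hz
      · intro hsub
        obtain ⟨w, hw⟩ := hslcne (b + 1)
        have hwi : w i = b + 1 := by
          by_contra hne
          rw [slc, if_neg hne] at hw
          exact hw rfl
        have hψw : ψ w ≠ 0 := by
          rw [slc, if_pos hwi] at hw
          exact hw
        have hwb : slc i b ψ w = 0 := by
          rw [slc, if_neg]
          rw [hwi]
          intro hcon
          rcases z2_cases b with hb | hb <;> rw [hb] at hcon <;> exact absurd hcon (by decide)
        have := hsub hψw
        simp only [Set.mem_setOf_eq] at this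
        exact this hwb
    have hlt := Set.ncard_lt_ncard hss (Set.toFinite _)
    have e1 : Nat.card {z : V2 n // (c2 • slc i b ψ) z ≠ 0}
        = {z : V2 n | slc i b ψ z ≠ 0}.ncard := by
      rw [← Nat.card_coe_set_eq, ← hset]
      rfl
    have e2 : Nat.card {z : V2 n // ψ z ≠ 0} = {z : V2 n | ψ z ≠ 0}.ncard :=
      Nat.card_coe_set_eq _
    rw [e1, e2]
    exact hlt
  refine ⟨c2 • slc i 0 ψ, c2 • slc i 1 ψ, c2⁻¹, c2⁻¹, hstab 0, hstab 1,
    inv_ne_zero hc2ne, inv_ne_zero hc2ne, hcard 0, hcard 1, ?_⟩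
  funext z
  simp only [Pi.add_apply, Pi.smul_apply, smul_eq_mul]
  rw [← mul_assoc, ← mul_assoc, inv_mul_cancel₀ hc2ne, one_mul, one_mul]
  rcases z2_cases (z i) with h0 | h1
  · rw [slc, slc, if_pos h0, if_neg (by rw [h0]; decide), add_zero]
  · rw [slc, slc, if_neg (by rw [h1]; decide), if_pos h1, zero_add]
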